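/- Let G be a finite connected weighted graph with edges e₁,…,e_m. The orthogonal projection π: C_1(G,ℝ) → H_1(G,ℝ) with respect to the inner product ⟨α,β⟩ = Σ α(e)β(e)ℓ(e) satisfies π(e_i) = Σ_j a_{ij} e_j where a_{ij} = (1/w(G)) Σ_T α_{T,e_i}(e_j) w(T), the sum being over all spanning trees T of G. -/

import Mathlib

/-!
Put `γ = (1/w(G)) Σ_T w(T) α_{T,i}`. It is a cycle, and we show `⟨γ, c⟩ = c(e_i) ℓ(e_i)` for every
cycle `c`; since `β` has the same inner products with cycles, `β = γ`.

Two facts about a spanning tree `T` give this. First, a cycle vanishing off `T` is zero (it has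
zero flux through the fundamental cut of each tree edge), so every cycle expands as
`c = Σ_j c(e_j) α_{T,j}`. Second, if `α_{T,i}(e_j) ≠ 0` then `T' = T - e_j + e_i` is again a
spanning tree, `α_{T,i}(e_j) = ±1` (the sign with which `e_i` crosses the cut of `e_j`),
`α_{T',j} = α_{T,i}(e_j) α_{T,i}` and `w(T') ℓ(e_i) = w(T) ℓ(e_j)`. This exchange is an involution
between the trees contributing to both sides of the symmetry
`Σ_T w(T) α_{T,i}(e_j) ℓ(e_j) = Σ_T w(T) α_{T,j}(e_i) ℓ(e_i)`, and then
`w(G) ⟨γ, c⟩ = Σ_T w(T) Σ_j c(e_j) α_{T,j}(e_i) ℓ(e_i) = w(G) c(e_i) ℓ(e_i)`.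
The existence of spanning trees, and the fact that removing a tree edge disconnects, come from
counting connected components.
-/

/-- A finite weighted (multi)graph with a fixed orientation of the edges:
vertex type `V`, edge type `E`, tail/head maps and a positive length function. -/
structure WGraph where
  V : Type
  E : Type
  [fV : Fintype V]
  [fE : Fintype E]
  [dV : DecidableEq V]
  [dE : DecidableEq E]
  tail : E → V
  head : E → V
  len : E → ℝ
  len_pos : ∀ e, 0 < len e

attribute [instance] WGraph.fV WGraph.fE WGraph.dV WGraph.dE

namespace WGraph

variable (G : WGraph)

/-- Two vertices are adjacent if some edge joins them (in either direction). -/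
def Adj (x y : G.V) : Prop :=
  ∃ e, (G.tail e = x ∧ G.head e = y) ∨ (G.tail e = y ∧ G.head e = x)

/-- A weighted graph is connected if any two vertices are joined by a walk. -/
def Connected : Prop := ∀ x y : G.V, Relation.ReflTransGen G.Adj x y

/-- The differential `d : C_0(G,ℝ) → C_1(G,ℝ)`, `(df)(e) = (f(e⁺) - f(e⁻))/ℓ(e)`. -/
noncomputable def d (f : G.V → ℝ) : G.E → ℝ :=
  fun e => (f (G.head e) - f (G.tail e)) / G.len e

/-- The adjoint `d* : C_1(G,ℝ) → C_0(G,ℝ)`,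
`(d*α)(x) = Σ_{e⁺ = x} α(e) - Σ_{e⁻ = x} α(e)`. -/
def dStar (α : G.E → ℝ) : G.V → ℝ := fun x =>
  (∑ e ∈ Finset.univ.filter fun e => G.head e = x, α e) -
    ∑ e ∈ Finset.univ.filter fun e => G.tail e = x, α e

/-- The inner product `⟨α,β⟩ = Σ_e α(e) β(e) ℓ(e)` on real 1-chains. -/
noncomputable def ip (α β : G.E → ℝ) : ℝ := ∑ e, α e * β e * G.len e

/-- Real 1-cycles: the kernel of `d*`. -/
def IsCycle (α : G.E → ℝ) : Prop := ∀ x, G.dStar α x = 0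

/-- Exact 1-chains: the image of `d`. -/
def IsExact (α : G.E → ℝ) : Prop := ∃ f : G.V → ℝ, α = G.d f

/-- A 1-form `ω = Σ ω_e de` (recorded by its coefficients) is harmonic if at every
vertex the incoming and outgoing coefficients sum to the same value. -/
def Harmonic (ω : G.E → ℝ) : Prop :=
  ∀ x, (∑ e ∈ Finset.univ.filter fun e => G.head e = x, ω e) =
    ∑ e ∈ Finset.univ.filter fun e => G.tail e = x, ω e

/-- Integration of the 1-form `ω` along the 1-chain `α`: `∫_α ω = Σ_e ω_e α(e) ℓ(e)`. -/
noncomputable def intPair (ω α : G.E → ℝ) : ℝ := ∑ e, ω e * α e * G.len e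

/-- `d*` on integral 1-chains. -/
def dStarZ (α : G.E → ℤ) : G.V → ℤ := fun x =>
  (∑ e ∈ Finset.univ.filter fun e => G.head e = x, α e) -
    ∑ e ∈ Finset.univ.filter fun e => G.tail e = x, α e

/-- Integral 1-cycles. -/
def IsCycleZ (α : G.E → ℤ) : Prop := ∀ x, G.dStarZ α x = 0

/-- `α ∈ im(d)_ℤ`: `α` is an integral 1-chain which is the differential of a real
function on the vertices (a function with integer slopes). -/
def IsExactZ (α : G.E → ℤ) : Prop :=
  ∃ f : G.V → ℝ, ∀ e, (α e : ℝ) = G.d f e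

/-- The subgroup `H_1(G,ℤ) ⊕ im(d)_ℤ` of `C_1(G,ℤ)`, i.e. the subgroup generated by
integral cycles together with integral exact chains. -/
def jacRel : AddSubgroup (G.E → ℤ) :=
  AddSubgroup.closure {α | G.IsCycleZ α ∨ G.IsExactZ α}

/-- The Jacobian group of a weighted graph: `J(G) = C_1(G,ℤ)/(H_1(G,ℤ) ⊕ im(d)_ℤ)`. -/
def Jac := (G.E → ℤ) ⧸ G.jacRel

noncomputable instance : AddCommGroup G.Jac :=
  inferInstanceAs (AddCommGroup ((G.E → ℤ) ⧸ G.jacRel))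

/-- Divisors of degree zero. -/
def Div0 : AddSubgroup (G.V → ℤ) where
  carrier := {D | ∑ x, D x = 0}
  add_mem' := by
    intro a b ha hb
    simp only [Set.mem_setOf_eq] at *
    simp [Finset.sum_add_distrib, ha, hb]
  zero_mem' := by simp
  neg_mem' := by
    intro a ha
    simp only [Set.mem_setOf_eq] at *
    simp [ha]

/-- `d*` as a group homomorphism on integral 1-chains. -/
def dStarZHom : (G.E → ℤ) →+ (G.V → ℤ) where
  toFun := G.dStarZ
  map_zero' := by funext x; simp [dStarZ]
  map_add' := by
    intro a b
    funext x
    simp [dStarZ, Finset.sum_add_distrib]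
    ring

/-- The subgroup `im(d)_ℤ` of `C_1(G,ℤ)`. -/
def imdZ : AddSubgroup (G.E → ℤ) where
  carrier := {α | G.IsExactZ α}
  add_mem' := by
    rintro a b ⟨f, hf⟩ ⟨g, hg⟩
    exact ⟨f + g, fun e => by
      simp only [Pi.add_apply, Int.cast_add, hf e, hg e, d]; ring⟩
  zero_mem' := ⟨0, fun e => by simp [d]⟩
  neg_mem' := by
    rintro a ⟨f, hf⟩
    exact ⟨-f, fun e => by
      simp only [Pi.neg_apply, Int.cast_neg, hf e, d]; ring⟩

/-- Principal divisors: `Prin(G) = d*(im(d)_ℤ)`. -/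
def Prin : AddSubgroup (G.V → ℤ) := G.imdZ.map G.dStarZHom

lemma sum_dStarZ (α : G.E → ℤ) : ∑ x, G.dStarZ α x = 0 := by
  simp only [dStarZ, Finset.sum_sub_distrib]
  rw [Finset.sum_fiberwise, Finset.sum_fiberwise]
  simp

/-- The degree-zero Picard group `Pic(G) = Div⁰(G)/Prin(G)`. -/
def PicZ := G.Div0 ⧸ (G.Prin.addSubgroupOf G.Div0)

noncomputable instance : AddCommGroup G.PicZ :=
  inferInstanceAs (AddCommGroup (G.Div0 ⧸ (G.Prin.addSubgroupOf G.Div0)))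

/-- The weighted graph obtained by deleting the edge `e₀`. -/
def delEdge (e₀ : G.E) : WGraph where
  V := G.V
  E := {e : G.E // e ≠ e₀}
  tail := fun e => G.tail e.1
  head := fun e => G.head e.1
  len := fun e => G.len e.1
  len_pos := fun e => G.len_pos e.1

/-- An edge is a bridge if deleting it disconnects the graph. -/
def IsBridge (e₀ : G.E) : Prop := ¬ (G.delEdge e₀).Connected

/-- The weighted graph obtained by deleting a vertex `z` (and all incident edges). -/
def delVertex (z : G.V) : WGraph where
  V := {x : G.V // x ≠ z}
  E := {e : G.E // G.tail e ≠ z ∧ G.head e ≠ z}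
  tail := fun e => ⟨G.tail e.1, e.2.1⟩
  head := fun e => ⟨G.head e.1, e.2.2⟩
  len := fun e => G.len e.1
  len_pos := fun e => G.len_pos e.1

open scoped Classical in
/-- The (discrete) potential kernel: `jKer z y` is the function `f` with `f(z) = 0`
and `Δf = δ_y - δ_z` (when such a function exists; it is unique on a
connected graph). -/
noncomputable def jKer (z y : G.V) : G.V → ℝ :=
  if h : ∃ f : G.V → ℝ, f z = 0 ∧ ∀ w, G.dStar (G.d f) w =
      (if w = y then 1 else 0) - (if w = z then 1 else 0)
  then h.choose else 0

/-- Connectivity using only the edges in `S`. -/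
def ConnectedOn (S : Finset G.E) : Prop :=
  ∀ x y : G.V, Relation.ReflTransGen
    (fun a b => ∃ e ∈ S, (G.tail e = a ∧ G.head e = b) ∨ (G.tail e = b ∧ G.head e = a)) x y

/-- A spanning tree: a spanning connected edge set with `#V - 1` edges. -/
def IsSpanningTree (T : Finset G.E) : Prop :=
  G.ConnectedOn T ∧ T.card + 1 = Fintype.card G.V

/-- The weight `w(T) = Π_{e ∉ T} ℓ(e)` of a spanning tree. -/
noncomputable def wt (T : Finset G.E) : ℝ := ∏ e ∈ Finset.univ \ T, G.len e

open scoped Classical in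
/-- `w(G) = Σ_T w(T)`, summed over all spanning trees. -/
noncomputable def wG : ℝ := ∑ T : Finset G.E, if G.IsSpanningTree T then G.wt T else 0

open scoped Classical in
/-- The Foster coefficient `F(e) = (1/w(G)) Σ_{T : e ∉ T} w(T)`. -/
noncomputable def foster (e : G.E) : ℝ :=
  (1 / G.wG) * ∑ T : Finset G.E, if G.IsSpanningTree T ∧ e ∉ T then G.wt T else 0

open scoped Classical in
/-- The fundamental cycle `α_{T,e}`: the unique 1-cycle supported on `T ∪ {e}` taking
the value `1` on `e`; by convention it is `0` when no such cycle exists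
(e.g. when `e ∈ T`). -/
noncomputable def fundCycle (T : Finset G.E) (e : G.E) : G.E → ℝ :=
  if h : ∃ α : G.E → ℝ, G.IsCycle α ∧ α e = 1 ∧ ∀ f, f ∉ T → f ≠ e → α f = 0
  then h.choose else 0

section Reachability

open Finset
open scoped Classical

variable {G}

def AdjOn (S : Finset G.E) (a b : G.V) : Prop :=
  ∃ e ∈ S, (G.tail e = a ∧ G.head e = b) ∨ (G.tail e = b ∧ G.head e = a)

def ReachableOn (S : Finset G.E) : G.V → G.V → Prop := Relation.ReflTransGen (AdjOn S)

variable {S S' : Finset G.E} {e : G.E} {a b x y : G.V}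

theorem AdjOn.symm (h : AdjOn S a b) : AdjOn S b a :=
  let ⟨e, he, h⟩ := h
  ⟨e, he, h.symm⟩

theorem ReachableOn.symm (h : ReachableOn S a b) : ReachableOn S b a := by
  induction h with
  | refl => exact .refl
  | tail _ hbc ih => exact ih.head hbc.symm

theorem ReachableOn.mono (hS : S ⊆ S') (h : ReachableOn S a b) : ReachableOn S' a b :=
  Relation.ReflTransGen.mono (fun _ _ ⟨e, he, h⟩ => ⟨e, hS he, h⟩) _ _ h

theorem reachableOn_of_mem (he : e ∈ S) : ReachableOn S (G.tail e) (G.head e) :=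
  .single ⟨e, he, .inl ⟨rfl, rfl⟩⟩

theorem ReachableOn.eq_of_empty (h : ReachableOn (∅ : Finset G.E) a b) : a = b := by
  induction h with
  | refl => rfl
  | tail _ hbc => obtain ⟨e, he, -⟩ := hbc; simp at he

theorem ReachableOn.of_erase_subset (h : ReachableOn S a b) (hS : S.erase e ⊆ S')
    (he : ReachableOn S' (G.tail e) (G.head e)) : ReachableOn S' a b := by
  refine Relation.reflTransGen_closed (fun c d ⟨f, hf, hcd⟩ => ?_) _ _ h
  by_cases hfe : f = e
  · subst hfe
    rcases hcd with ⟨rfl, rfl⟩ | ⟨rfl, rfl⟩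
    exacts [he, he.symm]
  · exact .single ⟨f, hS (mem_erase.2 ⟨hfe, hf⟩), hcd⟩

theorem ReachableOn.erase_or (h : ReachableOn S x y) (e : G.E) :
    ReachableOn (S.erase e) x y ∨ ReachableOn (S.erase e) (G.tail e) y ∨
      ReachableOn (S.erase e) (G.head e) y := by
  induction h with
  | refl => exact .inl .refl
  | @tail b c _ hbc ih =>
    obtain ⟨f, hf, hor⟩ := hbc
    by_cases hfe : f = e
    · subst hfe
      rcases hor with ⟨-, rfl⟩ | ⟨rfl, -⟩
      exacts [.inr (.inr .refl), .inr (.inl .refl)]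
    · have hbc : AdjOn (S.erase e) b c := ⟨f, mem_erase.2 ⟨hfe, hf⟩, hor⟩
      exact ih.imp (·.tail hbc) (Or.imp (·.tail hbc) (·.tail hbc))

theorem ReachableOn.erase_of_not_reachableOn (h : ReachableOn S a b)
    (ha : ¬ ReachableOn (S.erase e) a (G.tail e)) (hb : ¬ ReachableOn (S.erase e) b (G.tail e)) :
    ReachableOn (S.erase e) a b := by
  rcases h.erase_or e with hab | htb | hhb
  · exact hab
  · exact absurd htb.symm hb
  rcases h.symm.erase_or e with hba | hta | hha
  · exact hba.symm
  · exact absurd hta.symm ha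
  · exact hha.symm.trans hhb

theorem ConnectedOn.erase (h : G.ConnectedOn S)
    (he : ReachableOn (S.erase e) (G.tail e) (G.head e)) : G.ConnectedOn (S.erase e) :=
  fun x y => ReachableOn.of_erase_subset (h x y) subset_rfl he

theorem ConnectedOn.reachableOn_erase_or (h : G.ConnectedOn S) (e : G.E) (x : G.V) :
    ReachableOn (S.erase e) (G.tail e) x ∨ ReachableOn (S.erase e) (G.head e) x := by
  rcases ReachableOn.erase_or (h (G.tail e) x) e with h | h | h
  exacts [.inl h, .inl h, .inr h]

end Reachability

section Components

open Finset
open scoped Classical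

variable {G}

def reachableOnSetoid (S : Finset G.E) : Setoid G.V where
  r := ReachableOn S
  iseqv := ⟨fun _ => .refl, ReachableOn.symm, Relation.ReflTransGen.trans⟩

noncomputable def numComponents (S : Finset G.E) : ℕ := Nat.card (Quotient (reachableOnSetoid S))

variable {S : Finset G.E} {e : G.E}

theorem reachableOnSetoid_mono {S S' : Finset G.E} (h : S ⊆ S') :
    reachableOnSetoid S ≤ reachableOnSetoid S' :=
  fun _ _ => ReachableOn.mono h

theorem numComponents_empty : numComponents (∅ : Finset G.E) = Fintype.card G.V := by
  rw [← Nat.card_eq_fintype_card]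
  exact Nat.card_eq_of_bijective (Quotient.mk (reachableOnSetoid ∅))
    ⟨fun _ _ h => ReachableOn.eq_of_empty (Quotient.exact h), Quotient.mk_surjective⟩ |>.symm

theorem numComponents_le_one (h : G.ConnectedOn S) : numComponents S ≤ 1 := by
  refine Finite.card_le_one_iff_subsingleton.2 ⟨fun p q => ?_⟩
  induction p, q using Quotient.inductionOn₂ with
  | h a b => exact Quotient.sound (h a b)

theorem one_le_numComponents [Nonempty G.V] : 1 ≤ numComponents S := by
  have : Nonempty (Quotient (reachableOnSetoid S)) := .map (Quotient.mk _) inferInstance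
  exact Nat.card_pos

theorem numComponents_erase_le (S : Finset G.E) (e : G.E) :
    numComponents (S.erase e) ≤ numComponents S + 1 := by
  -- the classes of `S - e` other than that of `tail e` inject into the classes of `S`
  set t := Quotient.mk (reachableOnSetoid (S.erase e)) (G.tail e)
  let f : Quotient (reachableOnSetoid (S.erase e)) → Option (Quotient (reachableOnSetoid S)) :=
    fun q => if q = t then none else
      some (Setoid.map_of_le (reachableOnSetoid_mono (S.erase_subset e)) q)
  have hf : f.Injective := by
    intro p q hpq
    induction p, q using Quotient.inductionOn₂ with
    | h a b =>
      by_cases ha : ⟦a⟧ = t <;> by_cases hb : ⟦b⟧ = t <;> simp only [f, ha, hb] at hpq ⊢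
      · simp at hpq
      · simp at hpq
      · exact Quotient.sound <| ReachableOn.erase_of_not_reachableOn
          (Quotient.exact (Option.some_injective _ hpq))
          (fun h => ha (Quotient.sound h)) (fun h => hb (Quotient.sound h))
  simpa [numComponents, Finite.card_option] using Nat.card_le_card_of_injective f hf

theorem numComponents_lt_erase (he : e ∈ S)
    (hbridge : ¬ ReachableOn (S.erase e) (G.tail e) (G.head e)) :
    numComponents S < numComponents (S.erase e) := by
  by_contra! hle
  have hsurj : (Setoid.map_of_le (reachableOnSetoid_mono (S.erase_subset e))).Surjective :=
    Quotient.ind fun a => ⟨⟦a⟧, rfl⟩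
  exact hbridge <| Quotient.exact <|
    (hsurj.bijective_of_nat_card_le hle).injective (Quotient.sound (reachableOn_of_mem he))

theorem card_le_numComponents_add_card (S : Finset G.E) :
    Fintype.card G.V ≤ numComponents S + #S := by
  induction S using Finset.induction_on with
  | empty => simp [numComponents_empty]
  | @insert e S he ih =>
    have := numComponents_erase_le (insert e S) e
    rw [erase_insert he] at this
    rw [card_insert_of_notMem he]
    omega

theorem numComponents_add_card_le (S : Finset G.E)
    (hS : ∀ e ∈ S, ¬ ReachableOn (S.erase e) (G.tail e) (G.head e)) :
    numComponents S + #S ≤ Fintype.card G.V := by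
  induction S using Finset.induction_on with
  | empty => simp [numComponents_empty]
  | @insert e S he ih =>
    have hlt := numComponents_lt_erase (mem_insert_self e S) (hS e (mem_insert_self e S))
    rw [erase_insert he] at hlt
    have := ih fun f hf hreach => hS f (mem_insert_of_mem hf)
      (hreach.mono (erase_subset_erase f (subset_insert e S)))
    rw [card_insert_of_notMem he]
    omega

theorem ConnectedOn.card_le (h : G.ConnectedOn S) : Fintype.card G.V ≤ #S + 1 := by
  have := card_le_numComponents_add_card S
  have := numComponents_le_one h
  omega

theorem ConnectedOn.exists_isSpanningTree_subset [Nonempty G.V] (h : G.ConnectedOn S) :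
    ∃ T ⊆ S, G.IsSpanningTree T := by
  induction S using Finset.strongInduction with
  | H S ih =>
    by_cases hred : ∃ e ∈ S, ReachableOn (S.erase e) (G.tail e) (G.head e)
    · obtain ⟨e, he, hreach⟩ := hred
      obtain ⟨T, hTS, hT⟩ := ih _ (erase_ssubset he) (h.erase hreach)
      exact ⟨T, hTS.trans (erase_subset e S), hT⟩
    · push Not at hred
      have := numComponents_add_card_le S hred
      have := h.card_le
      have : 1 ≤ numComponents S := one_le_numComponents
      exact ⟨S, subset_rfl, h, by omega⟩

theorem Connected.exists_isSpanningTree [Nonempty G.V] (hG : G.Connected) :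
    ∃ T, G.IsSpanningTree T := by
  have huniv : G.ConnectedOn univ := fun x y =>
    Relation.ReflTransGen.mono (fun _ _ ⟨e, h⟩ => ⟨e, mem_univ e, h⟩) _ _ (hG x y)
  obtain ⟨T, -, hT⟩ := huniv.exists_isSpanningTree_subset
  exact ⟨T, hT⟩

theorem IsSpanningTree.not_reachableOn_erase {T : Finset G.E} (hT : G.IsSpanningTree T)
    {j : G.E} (hj : j ∈ T) : ¬ ReachableOn (T.erase j) (G.tail j) (G.head j) := fun h => by
  have := (hT.1.erase h).card_le
  have := card_erase_add_one hj
  have := hT.2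
  omega

end Components

section Cycles

open Finset
open scoped Classical

def dStarₗ : (G.E → ℝ) →ₗ[ℝ] (G.V → ℝ) where
  toFun := G.dStar
  map_add' α β := by
    ext x
    simp only [dStar, Pi.add_apply, sum_add_distrib]
    ring
  map_smul' c α := by
    ext x
    simp only [dStar, Pi.smul_apply, smul_eq_mul, ← mul_sum, RingHom.id_apply]
    ring

def cycles : Submodule ℝ (G.E → ℝ) := LinearMap.ker G.dStarₗ

variable {G}

theorem mem_cycles {α : G.E → ℝ} : α ∈ G.cycles ↔ G.IsCycle α :=
  LinearMap.mem_ker.trans funext_iff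

theorem dStar_add (α β : G.E → ℝ) : G.dStar (α + β) = G.dStar α + G.dStar β :=
  map_add G.dStarₗ α β

theorem dStar_sub (α β : G.E → ℝ) : G.dStar (α - β) = G.dStar α - G.dStar β :=
  map_sub G.dStarₗ α β

theorem dStar_single (e : G.E) :
    G.dStar (Pi.single e 1) = Pi.single (G.head e) 1 - Pi.single (G.tail e) 1 := by
  ext x
  simp [dStar, Pi.single_apply, eq_comm]

theorem ReachableOn.exists_chain {S : Finset G.E} {x y : G.V} (h : ReachableOn S x y) :
    ∃ c : G.E → ℝ, (∀ f ∉ S, c f = 0) ∧ G.dStar c = Pi.single y 1 - Pi.single x 1 := by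
  induction h with
  | refl => exact ⟨0, fun _ _ => rfl, by rw [sub_self]; exact map_zero G.dStarₗ⟩
  | @tail b d _ hbd ih =>
    obtain ⟨c, hc, hdc⟩ := ih
    obtain ⟨e, he, hor⟩ := hbd
    have hce : ∀ f ∉ S, (Pi.single e 1 : G.E → ℝ) f = 0 := fun f hf =>
      Pi.single_eq_of_ne (ne_of_mem_of_not_mem he hf).symm 1
    rcases hor with ⟨rfl, rfl⟩ | ⟨rfl, rfl⟩
    · refine ⟨c + Pi.single e 1, fun f hf => by simp [hc f hf, hce f hf], ?_⟩
      rw [dStar_add, hdc, dStar_single]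
      abel
    · refine ⟨c - Pi.single e 1, fun f hf => by simp [hc f hf, hce f hf], ?_⟩
      rw [dStar_sub, hdc, dStar_single]
      abel

end Cycles

section FundamentalCycles

open Finset
open scoped Classical

variable {G} {T : Finset G.E} {i j f : G.E} {α : G.E → ℝ}

def cutIncidence (U : Finset G.V) (e : G.E) : ℝ :=
  (if G.head e ∈ U then 1 else 0) - (if G.tail e ∈ U then 1 else 0)

theorem inv_cutIncidence (U : Finset G.V) (e : G.E) :
    (G.cutIncidence U e)⁻¹ = G.cutIncidence U e := by
  unfold cutIncidence
  split_ifs <;> norm_num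

theorem IsCycle.sum_mul_cutIncidence (hα : G.IsCycle α) (U : Finset G.V) :
    ∑ e, α e * G.cutIncidence U e = 0 := by
  have hfiber (g : G.E → G.V) :
      ∑ x ∈ U, ∑ e ∈ univ.filter (g · = x), α e = ∑ e, α e * if g e ∈ U then 1 else 0 := by
    simp_rw [sum_filter, mul_ite, mul_one, mul_zero]
    rw [sum_comm]
    exact sum_congr rfl fun e _ => sum_ite_eq U (g e) _
  have := sum_eq_zero (s := U) fun x _ => hα x
  simp only [dStar, sum_sub_distrib, hfiber] at this
  simpa only [cutIncidence, mul_sub, sum_sub_distrib] using this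

noncomputable def shore (T : Finset G.E) (j : G.E) : Finset G.V :=
  univ.filter (ReachableOn (T.erase j) (G.tail j))

theorem cutIncidence_shore_of_mem_erase (he : f ∈ T.erase j) :
    G.cutIncidence (shore T j) f = 0 := by
  have hiff : G.head f ∈ shore T j ↔ G.tail f ∈ shore T j := by
    simp only [shore, mem_filter, mem_univ, true_and]
    exact ⟨fun h => h.tail ⟨f, he, .inr ⟨rfl, rfl⟩⟩, fun h => h.tail ⟨f, he, .inl ⟨rfl, rfl⟩⟩⟩
  simp [cutIncidence, hiff]

theorem IsSpanningTree.cutIncidence_shore_self (hT : G.IsSpanningTree T) (hj : j ∈ T) :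
    G.cutIncidence (shore T j) j = -1 := by
  simp [cutIncidence, shore, hT.not_reachableOn_erase hj,
    show ReachableOn (T.erase j) (G.tail j) (G.tail j) from .refl]

-- A cycle has zero flux through the fundamental cut of `j`.
theorem IsSpanningTree.apply_eq_sum_compl (hT : G.IsSpanningTree T) (hj : j ∈ T)
    (hα : G.IsCycle α) : α j = ∑ e ∈ Tᶜ, α e * G.cutIncidence (shore T j) e := by
  have h := hα.sum_mul_cutIncidence (shore T j)
  rw [← sum_add_sum_compl T, sum_eq_single_of_mem j hj fun e he hej =>
    by rw [cutIncidence_shore_of_mem_erase (mem_erase.2 ⟨hej, he⟩), mul_zero],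
    hT.cutIncidence_shore_self hj] at h
  linarith

theorem IsSpanningTree.eq_zero_of_isCycle (hT : G.IsSpanningTree T) (hα : G.IsCycle α)
    (hsupp : ∀ f ∉ T, α f = 0) : α = 0 := by
  ext j
  by_cases hj : j ∈ T
  · rw [hT.apply_eq_sum_compl hj hα, Pi.zero_apply]
    exact sum_eq_zero fun e he => by rw [hsupp e (mem_compl.1 he), zero_mul]
  · exact hsupp j hj

theorem fundCycle_isCycle (T : Finset G.E) (e : G.E) : G.IsCycle (G.fundCycle T e) := by
  unfold fundCycle
  split_ifs with h
  · exact h.choose_spec.1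
  · exact fun x => by simp [dStar]

theorem fundCycle_apply_of_notMem_of_ne (hf : f ∉ T) (hfi : f ≠ i) : G.fundCycle T i f = 0 := by
  unfold fundCycle
  split_ifs with h
  · exact h.choose_spec.2.2 f hf hfi
  · rfl

theorem ConnectedOn.fundCycle_self (hT : G.ConnectedOn T) (hi : i ∉ T) :
    G.fundCycle T i i = 1 := by
  obtain ⟨c, hc, hdc⟩ := ReachableOn.exists_chain (hT (G.head i) (G.tail i))
  have hex : ∃ α : G.E → ℝ, G.IsCycle α ∧ α i = 1 ∧ ∀ f, f ∉ T → f ≠ i → α f = 0 := by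
    refine ⟨Pi.single i 1 + c, fun x => ?_, by simp [hc i hi], fun f hf hfi => by
      simp [hc f hf, hfi]⟩
    rw [dStar_add, hdc, dStar_single]
    simp
  rw [fundCycle, dif_pos hex]
  exact hex.choose_spec.2.1

theorem IsSpanningTree.fundCycle_eq_zero_of_mem (hT : G.IsSpanningTree T) (hi : i ∈ T) :
    G.fundCycle T i = 0 := by
  unfold fundCycle
  split_ifs with h
  · obtain ⟨hcyc, hone, hsupp⟩ := h.choose_spec
    have := congrFun (hT.eq_zero_of_isCycle hcyc fun f hf =>
      hsupp f hf (ne_of_mem_of_not_mem hi hf).symm) i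
    simp [hone] at this
  · rfl

theorem IsSpanningTree.fundCycle_apply_of_notMem (hT : G.IsSpanningTree T) (hf : f ∉ T)
    (i : G.E) : G.fundCycle T i f = if i = f then 1 else 0 := by
  split_ifs with hif
  · subst hif
    exact hT.1.fundCycle_self hf
  by_cases hi : i ∈ T
  · rw [hT.fundCycle_eq_zero_of_mem hi, Pi.zero_apply]
  · exact fundCycle_apply_of_notMem_of_ne hf (Ne.symm hif)

theorem IsSpanningTree.fundCycle_eq (hT : G.IsSpanningTree T) (hi : i ∉ T)
    (hα : G.IsCycle α) (hαi : α i = 1) (hsupp : ∀ f ∉ T, f ≠ i → α f = 0) :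
    G.fundCycle T i = α := by
  refine sub_eq_zero.1 (hT.eq_zero_of_isCycle (mem_cycles.1 (sub_mem
    (mem_cycles.2 (fundCycle_isCycle T i)) (mem_cycles.2 hα))) fun f hf => ?_)
  by_cases hfi : f = i
  · simp [hfi, hT.1.fundCycle_self hi, hαi]
  · simp [fundCycle_apply_of_notMem_of_ne hf hfi, hsupp f hf hfi]

theorem IsSpanningTree.fundCycle_apply_of_mem (hT : G.IsSpanningTree T) (hi : i ∉ T)
    (hj : j ∈ T) : G.fundCycle T i j = G.cutIncidence (shore T j) i := by
  rw [hT.apply_eq_sum_compl hj (fundCycle_isCycle T i),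
    sum_eq_single_of_mem i (mem_compl.2 hi) fun e he hei => by
      rw [fundCycle_apply_of_notMem_of_ne (mem_compl.1 he) hei, zero_mul],
    hT.1.fundCycle_self hi, one_mul]

theorem IsSpanningTree.sum_mul_fundCycle (hT : G.IsSpanningTree T) {c : G.E → ℝ}
    (hc : G.IsCycle c) (f : G.E) : ∑ j, c j * G.fundCycle T j f = c f := by
  have hdiff : c - ∑ j, c j • G.fundCycle T j = 0 := by
    refine hT.eq_zero_of_isCycle (mem_cycles.1 (sub_mem (mem_cycles.2 hc)
      (sum_mem fun j _ => Submodule.smul_mem _ _ (mem_cycles.2 (fundCycle_isCycle T j)))))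
      fun f hf => ?_
    simp [Finset.sum_apply, hT.fundCycle_apply_of_notMem hf]
  have := congrFun hdiff f
  simp only [Pi.sub_apply, Finset.sum_apply, Pi.smul_apply, smul_eq_mul, Pi.zero_apply] at this
  linarith

end FundamentalCycles

theorem _root_.Finset.insert_erase_insert_erase {α : Type*} [DecidableEq α] {s : Finset α}
    {a b : α} (ha : a ∉ s) (hb : b ∈ s) : insert b ((insert a (s.erase b)).erase a) = s := by
  rw [Finset.erase_insert fun h => ha (Finset.mem_of_mem_erase h), Finset.insert_erase hb]

section Exchange

open Finset
open scoped Classical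

variable {G} {T : Finset G.E} {i j : G.E}

theorem ConnectedOn.reachableOn_of_cutIncidence_ne_zero (hT : G.ConnectedOn T)
    {S : Finset G.E} (hS : T.erase j ⊆ S) (hi : i ∈ S)
    (hne : G.cutIncidence (shore T j) i ≠ 0) : ReachableOn S (G.tail j) (G.head j) := by
  have hcross (a b : G.V) (ha : a ∈ shore T j) (hb : b ∉ shore T j) (hab : ReachableOn S a b) :
      ReachableOn S (G.tail j) (G.head j) := by
    simp only [shore, mem_filter, mem_univ, true_and] at ha hb
    have hbj := (hT.reachableOn_erase_or j b).resolve_left hb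
    exact ((ha.mono hS).trans hab).trans (hbj.mono hS).symm
  have hedge := reachableOn_of_mem hi
  unfold cutIncidence at hne
  by_cases hh : G.head i ∈ shore T j <;> by_cases ht : G.tail i ∈ shore T j <;>
    simp only [hh, ht, if_true, if_false, sub_self, ne_eq, not_true_eq_false] at hne
  · exact hcross _ _ hh ht hedge.symm
  · exact hcross _ _ ht hh hedge

theorem IsSpanningTree.exchange (hT : G.IsSpanningTree T) (hi : i ∉ T) (hj : j ∈ T)
    (hne : G.fundCycle T i j ≠ 0) : G.IsSpanningTree (insert i (T.erase j)) := by
  rw [hT.fundCycle_apply_of_mem hi hj] at hne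
  have hreach :=
    hT.1.reachableOn_of_cutIncidence_ne_zero (subset_insert i _) (mem_insert_self i _) hne
  refine ⟨fun x y => ReachableOn.of_erase_subset (hT.1 x y) (subset_insert i _) hreach, ?_⟩
  rw [card_insert_of_notMem fun h => hi (mem_of_mem_erase h), card_erase_add_one hj]
  exact hT.2

theorem IsSpanningTree.fundCycle_exchange (hT : G.IsSpanningTree T) (hi : i ∉ T) (hj : j ∈ T)
    (hne : G.fundCycle T i j ≠ 0) :
    G.fundCycle (insert i (T.erase j)) j = G.fundCycle T i j • G.fundCycle T i := by
  have hinv : (G.fundCycle T i j)⁻¹ = G.fundCycle T i j := by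
    rw [hT.fundCycle_apply_of_mem hi hj, inv_cutIncidence]
  refine (hT.exchange hi hj hne).fundCycle_eq (by simp [ne_of_mem_of_not_mem hj hi])
    (mem_cycles.1 (Submodule.smul_mem _ _ (mem_cycles.2 (fundCycle_isCycle T i))))
    (by simpa [hinv] using inv_mul_cancel₀ hne) fun f hf hfj => ?_
  simp only [mem_insert, mem_erase, not_or, not_and] at hf
  simp [fundCycle_apply_of_notMem_of_ne (fun h => hf.2 hfj h) hf.1]

theorem wt_pos (S : Finset G.E) : 0 < G.wt S :=
  prod_pos fun e _ => G.len_pos e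

theorem wt_mul_prod_len (S : Finset G.E) : G.wt S * ∏ e ∈ S, G.len e = ∏ e, G.len e :=
  prod_sdiff (subset_univ S)

theorem wt_exchange_mul_len (hi : i ∉ T) (hj : j ∈ T) :
    G.wt (insert i (T.erase j)) * G.len i = G.wt T * G.len j := by
  have h₁ := G.wt_mul_prod_len (insert i (T.erase j))
  have h₂ := G.wt_mul_prod_len T
  rw [prod_insert fun h => hi (mem_of_mem_erase h)] at h₁
  rw [← mul_prod_erase T G.len hj] at h₂
  refine mul_right_cancel₀ (b := ∏ e ∈ T.erase j, G.len e) (prod_pos fun e _ => G.len_pos e).ne' ?_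
  linear_combination h₁ - h₂

theorem IsSpanningTree.notMem_and_mem_of_fundCycle_ne_zero (hT : G.IsSpanningTree T)
    (hij : i ≠ j) (hne : G.fundCycle T i j ≠ 0) : i ∉ T ∧ j ∈ T :=
  ⟨fun hi => hne (by rw [hT.fundCycle_eq_zero_of_mem hi, Pi.zero_apply]),
    by_contra fun hj => hne (fundCycle_apply_of_notMem_of_ne hj hij.symm)⟩

theorem IsSpanningTree.exchange_spec (hT : G.IsSpanningTree T) (hij : i ≠ j)
    (hne : G.fundCycle T i j ≠ 0) :
    G.IsSpanningTree (insert i (T.erase j)) ∧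
      G.fundCycle (insert i (T.erase j)) j i = G.fundCycle T i j ∧
      insert j ((insert i (T.erase j)).erase i) = T ∧
      G.wt (insert i (T.erase j)) * G.len i = G.wt T * G.len j := by
  obtain ⟨hi, hj⟩ := hT.notMem_and_mem_of_fundCycle_ne_zero hij hne
  refine ⟨hT.exchange hi hj hne, ?_, insert_erase_insert_erase hi hj, wt_exchange_mul_len hi hj⟩
  rw [hT.fundCycle_exchange hi hj hne, Pi.smul_apply, hT.1.fundCycle_self hi, smul_eq_mul,
    mul_one]

end Exchange

section Projection

open Finset
open scoped Classical

variable {G}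

noncomputable def fundCycleSum (i j : G.E) : ℝ :=
  ∑ T : Finset G.E, if G.IsSpanningTree T then G.fundCycle T i j * G.wt T else 0

/-- The exchange `T ↦ T - j + i` matches the trees contributing to the two sides. -/
theorem fundCycleSum_mul_len_comm (i j : G.E) :
    G.fundCycleSum i j * G.len j = G.fundCycleSum j i * G.len i := by
  rcases eq_or_ne i j with rfl | hij
  · rfl
  have hterm {a b : G.E} {T : Finset G.E} :
      (if G.IsSpanningTree T then G.fundCycle T a b * G.wt T else 0) * G.len b ≠ 0 ↔
        G.IsSpanningTree T ∧ G.fundCycle T a b ≠ 0 := by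
    by_cases hT : G.IsSpanningTree T <;> simp [hT, (G.wt_pos T).ne', (G.len_pos b).ne']
  simp only [fundCycleSum, sum_mul]
  refine sum_bij_ne_zero (fun T _ _ => insert i (T.erase j)) (fun _ _ _ => mem_univ _)
    (fun T₁ _ h₁ T₂ _ h₂ h => ?_) (fun T' _ h' => ?_) (fun T _ h => ?_)
  · obtain ⟨hT₁, hne₁⟩ := hterm.1 h₁
    obtain ⟨hT₂, hne₂⟩ := hterm.1 h₂
    rw [← (hT₁.exchange_spec hij hne₁).2.2.1, ← (hT₂.exchange_spec hij hne₂).2.2.1, h]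
  · obtain ⟨hT', hne'⟩ := hterm.1 h'
    obtain ⟨hT, hfc, hback, -⟩ := hT'.exchange_spec hij.symm hne'
    exact ⟨_, mem_univ _, hterm.2 ⟨hT, hfc ▸ hne'⟩, hback⟩
  · obtain ⟨hT, hne⟩ := hterm.1 h
    obtain ⟨hT', hfc, -, hwt⟩ := hT.exchange_spec hij hne
    rw [if_pos hT, if_pos hT', hfc]
    linear_combination -G.fundCycle T i j * hwt

theorem isCycle_fundCycleSum (i : G.E) : G.IsCycle (G.fundCycleSum i) := by
  have h : G.fundCycleSum i = ∑ T, (if G.IsSpanningTree T then G.wt T else 0) • G.fundCycle T i := by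
    ext j
    simp only [fundCycleSum, Finset.sum_apply, Pi.smul_apply, smul_eq_mul]
    exact sum_congr rfl fun T _ => by split_ifs <;> ring
  rw [← mem_cycles, h]
  exact sum_mem fun T _ => Submodule.smul_mem _ _ (mem_cycles.2 (fundCycle_isCycle T i))

theorem sum_mul_fundCycleSum {c : G.E → ℝ} (hc : G.IsCycle c) (f : G.E) :
    ∑ j, c j * G.fundCycleSum j f = G.wG * c f := by
  simp only [fundCycleSum, wG, mul_sum, sum_mul]
  rw [sum_comm]
  refine sum_congr rfl fun T _ => ?_
  split_ifs with hT
  · rw [← hT.sum_mul_fundCycle hc f, mul_sum]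
    exact sum_congr rfl fun j _ => by ring
  · simp

theorem ip_fundCycleSum (i : G.E) {c : G.E → ℝ} (hc : G.IsCycle c) :
    G.ip (G.fundCycleSum i) c = G.wG * (c i * G.len i) := by
  calc G.ip (G.fundCycleSum i) c = ∑ j, c j * G.fundCycleSum j i * G.len i := by
        refine sum_congr rfl fun j _ => ?_
        rw [mul_right_comm, fundCycleSum_mul_len_comm]
        ring
    _ = G.wG * (c i * G.len i) := by
        rw [← sum_mul, sum_mul_fundCycleSum hc]
        ring

theorem Connected.wG_pos [Nonempty G.V] (hG : G.Connected) : 0 < G.wG := by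
  obtain ⟨T₀, hT₀⟩ := hG.exists_isSpanningTree
  refine sum_pos' (fun T _ => ?_) ⟨T₀, mem_univ _, by simp [hT₀, wt_pos]⟩
  split_ifs
  exacts [(G.wt_pos T).le, le_rfl]

theorem ip_sub_left (α β γ : G.E → ℝ) : G.ip (α - β) γ = G.ip α γ - G.ip β γ := by
  simp only [ip, Pi.sub_apply, sub_mul, sum_sub_distrib]

theorem ip_smul_left (a : ℝ) (α β : G.E → ℝ) : G.ip (a • α) β = a * G.ip α β := by
  simp only [ip, Pi.smul_apply, smul_eq_mul, mul_sum, mul_assoc]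

theorem eq_zero_of_ip_self_eq_zero {α : G.E → ℝ} (h : G.ip α α = 0) : α = 0 := by
  ext e
  have := (sum_eq_zero_iff_of_nonneg fun e _ =>
    mul_nonneg (mul_self_nonneg (α e)) (G.len_pos e).le).1 h e (mem_univ e)
  simpa [(G.len_pos e).ne'] using this

theorem IsCycle.eq_of_ip_eq {α β : G.E → ℝ} (hα : G.IsCycle α) (hβ : G.IsCycle β)
    (h : ∀ γ, G.IsCycle γ → G.ip α γ = G.ip β γ) : α = β := by
  have hcyc := mem_cycles.1 (sub_mem (mem_cycles.2 hα) (mem_cycles.2 hβ))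
  exact sub_eq_zero.1 (eq_zero_of_ip_self_eq_zero (by rw [ip_sub_left, h _ hcyc, sub_self]))

end Projection

end WGraph

open scoped Classical in
/-- **Kirchhoff.** The orthogonal projection
`π : C₁(G,ℝ) → H₁(G,ℝ)` (characterized by: `π(δ_i)` is a cycle and
`δ_i - π(δ_i)` is orthogonal to all cycles) is given on the basis 1-chain `δ_i`
by averaging fundamental cycles over spanning trees:
`π(δ_i)(j) = (1/w(G)) Σ_T α_{T,i}(j) w(T)`. -/
theorem projection_via_spanning_trees (G : WGraph) (hG : G.Connected) (i : G.E)
    (β : G.E → ℝ) (hcyc : G.IsCycle β)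
    (horth : ∀ γ : G.E → ℝ, G.IsCycle γ →
      G.ip (fun j => (if j = i then (1 : ℝ) else 0) - β j) γ = 0) :
    ∀ j : G.E, β j = (1 / G.wG) *
      ∑ T : Finset G.E,
        if G.IsSpanningTree T then G.fundCycle T i j * G.wt T else 0 := by
  have : Nonempty G.V := ⟨G.tail i⟩
  have hβ (γ : G.E → ℝ) (hγ : G.IsCycle γ) : G.ip β γ = γ i * G.len i := by
    have := horth γ hγ
    simp only [WGraph.ip, sub_mul, Finset.sum_sub_distrib, ite_mul, one_mul, zero_mul,
      Finset.sum_ite_eq', Finset.mem_univ, if_true] at this ⊢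
    linarith
  have hproj : β = (1 / G.wG) • WGraph.fundCycleSum i := by
    refine hcyc.eq_of_ip_eq (WGraph.mem_cycles.1 (Submodule.smul_mem _ _
      (WGraph.mem_cycles.2 (WGraph.isCycle_fundCycleSum i)))) fun γ hγ => ?_
    rw [hβ γ hγ, WGraph.ip_smul_left, WGraph.ip_fundCycleSum i hγ]
    field_simp [hG.wG_pos.ne']
  exact congrFun hproj
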